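/- arXiv:1412.8601 — 2 statements merged into one kernel-verified Lean document; each statement's English description precedes it below -/
import Mathlib

section
/- Let A^n = k⟨x,y⟩/(x², xyx, …, x yⁿ x). Then the subalgebra Cⁿ of A^n generated by y and x y^{n+1} is a free associative algebra on these two elements. -/
noncomputable section

open FreeAlgebra

/-- The relations `x² = 0, xyx = 0, …, x yⁿ x = 0` in the free algebra `k⟨x,y⟩`,
where `x = ι 0`, `y = ι 1`. -/
def gsRel (k : Type*) [Field k] (n : ℕ) :
    FreeAlgebra k (Fin 2) → FreeAlgebra k (Fin 2) → Prop :=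
  fun p q => (∃ t ≤ n, p = ι k (0 : Fin 2) * (ι k (1 : Fin 2)) ^ t * ι k (0 : Fin 2)) ∧ q = 0

/-- `Aⁿ = k⟨x,y⟩/(x², xyx, …, x yⁿ x)`. -/
abbrev gsAlg (k : Type*) [Field k] (n : ℕ) := RingQuot (gsRel k n)

namespace GSaux

variable (k : Type*) [Field k] (n : ℕ)

/-- The module: monoid algebra of the free monoid on two letters. -/
abbrev M := MonoidAlgebra k (FreeMonoid (Fin 2))

/-- basis vector of a one-letter word -/
def e (i : Fin 2) : M k := MonoidAlgebra.single (FreeMonoid.of i) 1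

/-- the action of `x` on a basis word: strip prefix `0^(n+1)`, prepend `1`. -/
def gfun (w : FreeMonoid (Fin 2)) : M k :=
  if (FreeMonoid.toList w).take (n+1) = List.replicate (n+1) (0 : Fin 2) then
    MonoidAlgebra.single
      (FreeMonoid.ofList ((1 : Fin 2) :: (FreeMonoid.toList w).drop (n+1))) 1
  else 0

/-- action of `x`. -/
def Xop : M k →ₗ[k] M k := (Finsupp.lift (M k) k (FreeMonoid (Fin 2)) (gfun k n)).comp
  (MonoidAlgebra.coeffLinearEquiv k).toLinearMap

/-- action of `y`: left multiplication by `e 0`. -/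
def Yop : M k →ₗ[k] M k := LinearMap.mulLeft k (e k 0)

lemma Xop_single (w : FreeMonoid (Fin 2)) (c : k) :
    Xop k n (MonoidAlgebra.single w c) = c • gfun k n w := by
  rw [Xop, LinearMap.comp_apply]
  erw [Finsupp.lift_apply, Finsupp.sum_single_index (by simp)]

lemma of_pow (t : ℕ) :
    (FreeMonoid.of (0 : Fin 2)) ^ t = FreeMonoid.ofList (List.replicate t 0) := by
  induction t with
  | zero => rfl
  | succ t ih =>
    rw [pow_succ', ih, List.replicate_succ]
    rfl

lemma Yop_pow_single (t : ℕ) (w : FreeMonoid (Fin 2)) (c : k) :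
    (Yop k ^ t) (MonoidAlgebra.single w c) =
      MonoidAlgebra.single (FreeMonoid.ofList (List.replicate t 0 ++ FreeMonoid.toList w)) c := by
  rw [Yop, LinearMap.pow_mulLeft, LinearMap.mulLeft_apply, e, MonoidAlgebra.single_pow,
    MonoidAlgebra.single_mul_single, one_pow, one_mul, of_pow]
  rfl

lemma take_replicate_ne (t m : ℕ) (h : t ≤ m) (l : List (Fin 2)) :
    (List.replicate t (0 : Fin 2) ++ 1 :: l).take (m+1) ≠ List.replicate (m+1) (0 : Fin 2) := by
  induction t generalizing m with
  | zero =>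
    simp only [List.replicate_succ, List.nil_append, List.take_succ_cons]
    intro hc
    exact one_ne_zero (List.cons.injEq .. ▸ hc).1
  | succ t ih =>
    obtain ⟨m, rfl⟩ : ∃ m', m = m' + 1 := ⟨m - 1, by omega⟩
    simp only [List.replicate_succ, List.cons_append, List.take_succ_cons]
    intro hc
    exact ih m (by omega) (List.cons.injEq .. ▸ hc).2

/-- the relations hold. -/
lemma rel_zero (t : ℕ) (ht : t ≤ n) :
    Xop k n * Yop k ^ t * Xop k n = 0 := by
  apply MonoidAlgebra.lhom_ext'
  intro w
  apply LinearMap.ext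
  intro c
  simp only [LinearMap.comp_apply, MonoidAlgebra.lsingle_apply, Module.End.mul_apply,
    LinearMap.zero_apply, Xop_single]
  rcases em ((FreeMonoid.toList w).take (n+1) = List.replicate (n+1) (0 : Fin 2)) with hw | hw
  · rw [gfun, if_pos hw]
    rw [map_smul, map_smul]
    have h1 : ((1 : Fin 2) :: ((FreeMonoid.toList w).drop (n+1)) : List (Fin 2))
        = FreeMonoid.toList (FreeMonoid.ofList ((1 : Fin 2) :: (FreeMonoid.toList w).drop (n+1))) := rfl
    rw [Yop_pow_single, Xop_single, gfun,
      if_neg (by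
        rw [FreeMonoid.toList_ofList, FreeMonoid.toList_ofList]
        exact take_replicate_ne t n ht _)]
    simp
  · rw [gfun, if_neg hw]
    simp

/-- `X * Y^(n+1)` is left multiplication by `e 1`. -/
lemma XY_eq : Xop k n * Yop k ^ (n+1) = LinearMap.mulLeft k (e k 1) := by
  apply MonoidAlgebra.lhom_ext'
  intro w
  apply LinearMap.ext
  intro c
  simp only [LinearMap.comp_apply, MonoidAlgebra.lsingle_apply, Module.End.mul_apply,
    LinearMap.mulLeft_apply, Yop_pow_single, Xop_single]
  rw [gfun, FreeMonoid.toList_ofList,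
    if_pos (by rw [List.take_left']; simp),
    List.drop_left' (by simp)]
  rw [e, MonoidAlgebra.single_mul_single, one_mul, MonoidAlgebra.smul_single', mul_one]
  rfl

/-- the representation of the free algebra. -/
def ρ : FreeAlgebra k (Fin 2) →ₐ[k] Module.End k (M k) :=
  FreeAlgebra.lift k (fun i : Fin 2 => if i = 0 then Xop k n else Yop k)

lemma ρ_rel : ∀ ⦃p q⦄, gsRel k n p q → ρ k n p = ρ k n q := by
  rintro p q ⟨⟨t, ht, rfl⟩, rfl⟩
  simp only [map_mul, map_pow, map_zero, ρ, FreeAlgebra.lift_ι_apply]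
  simpa using rel_zero k n t ht

/-- the induced representation of the quotient. -/
def ρbar : gsAlg k n →ₐ[k] Module.End k (M k) :=
  RingQuot.liftAlgHom k ⟨ρ k n, ρ_rel k n⟩

/-- Any algebra map sending the generators to `[y]` and `[x y^(n+1)]` is injective. -/
lemma inj_aux (F : FreeAlgebra k (Fin 2) →ₐ[k] gsAlg k n)
    (h0 : F (ι k (0 : Fin 2)) = RingQuot.mkAlgHom k (gsRel k n) (ι k (1 : Fin 2)))
    (h1 : F (ι k (1 : Fin 2)) = RingQuot.mkAlgHom k (gsRel k n)
      (ι k (0 : Fin 2) * (ι k (1 : Fin 2)) ^ (n + 1))) :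
    Function.Injective F := by
  have key : (ρbar k n).comp F =
      (Algebra.lmul k (M k)).comp
        (FreeAlgebra.equivMonoidAlgebraFreeMonoid (R := k) (X := Fin 2)).toAlgHom := by
    apply FreeAlgebra.hom_ext
    funext i
    fin_cases i
    · show (ρbar k n) (F (ι k (0 : Fin 2))) = _
      rw [h0, ρbar, RingQuot.liftAlgHom_mkAlgHom_apply, ρ, FreeAlgebra.lift_ι_apply,
        if_neg (by decide)]
      show Yop k = Algebra.lmul k (M k)
        (FreeAlgebra.equivMonoidAlgebraFreeMonoid (ι k (0 : Fin 2)))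
      simp only [FreeAlgebra.equivMonoidAlgebraFreeMonoid, AlgEquiv.ofAlgHom,
        AlgEquiv.coe_mk, FreeAlgebra.lift_ι_apply]
      apply LinearMap.ext
      intro b
      simp [Yop, e, MonoidAlgebra.of_apply, Algebra.lmul]
    · show (ρbar k n) (F (ι k (1 : Fin 2))) = _
      rw [h1, ρbar, RingQuot.liftAlgHom_mkAlgHom_apply]
      show (ρ k n) _ = Algebra.lmul k (M k)
        (FreeAlgebra.equivMonoidAlgebraFreeMonoid (ι k (1 : Fin 2)))
      rw [map_mul, map_pow, ρ, FreeAlgebra.lift_ι_apply, FreeAlgebra.lift_ι_apply,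
        if_pos rfl, if_neg (by decide), XY_eq]
      simp only [FreeAlgebra.equivMonoidAlgebraFreeMonoid, AlgEquiv.ofAlgHom,
        AlgEquiv.coe_mk, FreeAlgebra.lift_ι_apply]
      apply LinearMap.ext
      intro b
      simp [e, MonoidAlgebra.of_apply, Algebra.lmul]
  intro p q h
  have h2 : ((ρbar k n).comp F) p = ((ρbar k n).comp F) q := by
    simp only [AlgHom.comp_apply, h]
  rw [key] at h2
  simp only [AlgHom.comp_apply, AlgEquiv.toAlgHom_eq_coe, AlgHom.coe_coe] at h2
  have h3 := congrFun (congrArg (fun (f : Module.End k (M k)) => (f : M k → M k)) h2) 1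
  simp only [Algebra.lmul, Module.End.mul_apply, mul_one] at h3
  exact FreeAlgebra.equivMonoidAlgebraFreeMonoid.injective (by simpa using h3)

end GSaux

theorem stmt_8 (k : Type*) [Field k] (n : ℕ) :
    Function.Injective
      (FreeAlgebra.lift k (fun i : Fin 2 =>
        if i = 0 then RingQuot.mkAlgHom k (gsRel k n) (ι k (1 : Fin 2))
        else RingQuot.mkAlgHom k (gsRel k n)
          (ι k (0 : Fin 2) * (ι k (1 : Fin 2)) ^ (n + 1))) :
        FreeAlgebra k (Fin 2) →ₐ[k] gsAlg k n) := by
  apply GSaux.inj_aux k n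
  · rw [FreeAlgebra.lift_ι_apply, if_pos rfl]
  · rw [FreeAlgebra.lift_ι_apply, if_neg (by decide)]

end
end

section
/- Let A^n = k⟨x,y⟩/(x², xyx, …, x yⁿ x). Then A^n is finitely generated as a left module over its subalgebra Cⁿ generated by y and x y^{n+1}; explicitly, A^n = Cⁿ·1 + Cⁿ·x + Cⁿ·(xy) + ⋯ + Cⁿ·(x yⁿ). -/
noncomputable section

open FreeAlgebra

/-- The quotient map `k⟨x,y⟩ → Aⁿ`. -/
def gsPi (k : Type*) [Field k] (n : ℕ) : FreeAlgebra k (Fin 2) →ₐ[k] gsAlg k n :=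
  RingQuot.mkAlgHom k (gsRel k n)

/-- `Cⁿ`, the unital subalgebra of `Aⁿ` generated by `y` and `x y^(n+1)`. -/
def gsC (k : Type*) [Field k] (n : ℕ) : Subalgebra k (gsAlg k n) :=
  Algebra.adjoin k
    {gsPi k n (ι k (1 : Fin 2)),
     gsPi k n (ι k (0 : Fin 2) * (ι k (1 : Fin 2)) ^ (n + 1))}

section Aux

variable (k : Type*) [Field k] (n : ℕ)

def gsX (i : ℕ) : gsAlg k n := gsPi k n (ι k (0 : Fin 2) * (ι k (1 : Fin 2)) ^ i)

def gsY : gsAlg k n := gsPi k n (ι k (1 : Fin 2))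

def gsM : Submodule (gsC k n) (gsAlg k n) :=
  Submodule.span (gsC k n) (insert 1 (Set.range fun i : Fin (n + 1) => gsX k n (i : ℕ)))

variable {k n}

lemma gs_smul_def (c : gsC k n) (a : gsAlg k n) : c • a = (c : gsAlg k n) * a := rfl

lemma gsY_mem : gsY k n ∈ gsC k n :=
  Algebra.subset_adjoin (Set.mem_insert _ _)

lemma gsG_mem : gsX k n (n + 1) ∈ gsC k n :=
  Algebra.subset_adjoin (Set.mem_insert_of_mem _ rfl)

lemma rel_eq_zero {t : ℕ} (ht : t ≤ n) :
    gsPi k n (ι k (0 : Fin 2) * (ι k (1 : Fin 2)) ^ t * ι k (0 : Fin 2)) = 0 := by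
  have hrel : gsRel k n (ι k (0 : Fin 2) * (ι k (1 : Fin 2)) ^ t * ι k (0 : Fin 2)) 0 :=
    ⟨⟨t, ht, rfl⟩, rfl⟩
  have h := RingQuot.mkAlgHom_rel k (s := gsRel k n) hrel
  rw [gsPi, h, map_zero]

lemma gsX_mul_x {i : ℕ} (hi : i ≤ n) (p : FreeAlgebra k (Fin 2)) :
    gsX k n i * gsPi k n (ι k (0 : Fin 2) * p) = 0 := by
  have h1 : gsX k n i * gsPi k n (ι k (0 : Fin 2) * p) =
      gsPi k n (ι k (0 : Fin 2) * (ι k (1 : Fin 2)) ^ i * ι k (0 : Fin 2)) * gsPi k n p := by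
    rw [gsX, ← map_mul, ← map_mul]
    congr 1
    simp only [mul_assoc]
  rw [h1, rel_eq_zero hi, zero_mul]

lemma gsX_mul_gsX {i : ℕ} (hi : i ≤ n) (j : ℕ) : gsX k n i * gsX k n j = 0 :=
  gsX_mul_x hi _

lemma gsX_mul_gsY_pow (i a : ℕ) : gsX k n i * (gsY k n) ^ a = gsX k n (i + a) := by
  rw [gsX, gsY, ← map_pow, ← map_mul, gsX, pow_add, mul_assoc]

lemma one_mem_M : (1 : gsAlg k n) ∈ gsM k n :=
  Submodule.subset_span (Set.mem_insert _ _)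

lemma gsX_mem_M (i : Fin (n + 1)) : gsX k n (i : ℕ) ∈ gsM k n :=
  Submodule.subset_span (Set.mem_insert_of_mem _ ⟨i, rfl⟩)

lemma C_mem_M {c : gsAlg k n} (hc : c ∈ gsC k n) : c ∈ gsM k n := by
  have := (gsM k n).smul_mem ⟨c, hc⟩ one_mem_M
  simpa [gs_smul_def] using this

lemma gsX_nat_mem_M (m : ℕ) : gsX k n m ∈ gsM k n := by
  rcases le_or_gt m n with h | h
  · exact gsX_mem_M ⟨m, by omega⟩
  · obtain ⟨b, rfl⟩ : ∃ b, m = (n + 1) + b := ⟨m - (n + 1), by omega⟩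
    rw [← gsX_mul_gsY_pow]
    exact C_mem_M (mul_mem gsG_mem (pow_mem gsY_mem b))

lemma M_mul_gsX {m : gsAlg k n} (hm : m ∈ gsM k n) (j : Fin (n + 1)) :
    m * gsX k n (j : ℕ) ∈ gsM k n := by
  induction hm using Submodule.span_induction with
  | mem x hx =>
    rcases hx with rfl | ⟨i, rfl⟩
    · rw [one_mul]; exact gsX_mem_M j
    · rw [gsX_mul_gsX (by omega : (i : ℕ) ≤ n)]; exact zero_mem _
  | zero => rw [zero_mul]; exact zero_mem _
  | add x y _ _ hx hy => rw [add_mul]; exact add_mem hx hy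
  | smul c x _ hx =>
    rw [gs_smul_def, mul_assoc, ← gs_smul_def]; exact Submodule.smul_mem _ _ hx

lemma M_mul_C {c : gsAlg k n} (hc : c ∈ gsC k n) :
    ∀ m ∈ gsM k n, m * c ∈ gsM k n := by
  induction hc using Algebra.adjoin_induction with
  | mem z hz =>
    intro m hm
    simp only [Set.mem_insert_iff, Set.mem_singleton_iff] at hz
    rcases hz with rfl | rfl
    · -- z = y
      induction hm using Submodule.span_induction with
      | mem x hx =>
        rcases hx with rfl | ⟨i, rfl⟩
        · rw [one_mul]; exact C_mem_M gsY_mem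
        · have h1 : gsX k n (i : ℕ) * gsPi k n (ι k (1 : Fin 2)) = gsX k n ((i : ℕ) + 1) := by
            simpa [gsY] using gsX_mul_gsY_pow (k := k) (n := n) (i : ℕ) 1
          rw [h1]; exact gsX_nat_mem_M _
      | zero => rw [zero_mul]; exact zero_mem _
      | add x y _ _ hx hy => rw [add_mul]; exact add_mem hx hy
      | smul c x _ hx =>
        rw [gs_smul_def, mul_assoc, ← gs_smul_def]; exact Submodule.smul_mem _ _ hx
    · -- z = g
      induction hm using Submodule.span_induction with
      | mem x hx =>
        rcases hx with rfl | ⟨i, rfl⟩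
        · rw [one_mul]; exact C_mem_M gsG_mem
        · have h1 : gsX k n (i : ℕ) *
              gsPi k n (ι k (0 : Fin 2) * (ι k (1 : Fin 2)) ^ (n + 1)) = 0 :=
            gsX_mul_x (by omega) _
          rw [h1]; exact zero_mem _
      | zero => rw [zero_mul]; exact zero_mem _
      | add x y _ _ hx hy => rw [add_mul]; exact add_mem hx hy
      | smul c x _ hx =>
        rw [gs_smul_def, mul_assoc, ← gs_smul_def]; exact Submodule.smul_mem _ _ hx
  | algebraMap r =>
    intro m hm
    rw [← Algebra.commutes r m, ← Algebra.smul_def,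
      ← algebraMap_smul (↥(gsC k n)) r m]
    exact Submodule.smul_mem _ _ hm
  | add x y _ _ hx hy =>
    intro m hm; rw [mul_add]; exact add_mem (hx m hm) (hy m hm)
  | mul x y _ _ hx hy =>
    intro m hm; rw [← mul_assoc]; exact hy _ (hx m hm)

lemma M_mul_M {b : gsAlg k n} (hb : b ∈ gsM k n) :
    ∀ a ∈ gsM k n, a * b ∈ gsM k n := by
  induction hb using Submodule.span_induction with
  | mem x hx =>
    intro a ha
    rcases hx with rfl | ⟨j, rfl⟩
    · rw [mul_one]; exact ha
    · exact M_mul_gsX ha j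
  | zero => intro a ha; rw [mul_zero]; exact zero_mem _
  | add x y _ _ hx hy => intro a ha; rw [mul_add]; exact add_mem (hx a ha) (hy a ha)
  | smul c x _ hx =>
    intro a ha
    rw [gs_smul_def, ← mul_assoc]
    exact hx _ (M_mul_C c.2 a ha)

lemma all_mem_M (a : gsAlg k n) : a ∈ gsM k n := by
  obtain ⟨p, rfl⟩ := RingQuot.mkAlgHom_surjective k (gsRel k n) a
  show gsPi k n p ∈ gsM k n
  induction p using FreeAlgebra.induction with
  | grade0 r => rw [AlgHom.commutes]; exact C_mem_M (algebraMap_mem _ r)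
  | grade1 x =>
    fin_cases x
    · have h0 : gsPi k n (ι k (0 : Fin 2)) = gsX k n 0 := by
        rw [gsX, pow_zero, mul_one]
      rw [show (⟨0, by omega⟩ : Fin 2) = (0 : Fin 2) from rfl, h0]
      exact gsX_mem_M (⟨0, by omega⟩ : Fin (n + 1))
    · exact C_mem_M gsY_mem
  | mul p q hp hq => rw [map_mul]; exact M_mul_M hq _ hp
  | add p q hp hq => rw [map_add]; exact add_mem hp hq

end Aux

/-- `Aⁿ = Cⁿ·1 + Cⁿ·x + Cⁿ·(xy) + ⋯ + Cⁿ·(x yⁿ)` as a left `Cⁿ`-module. -/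
theorem stmt_9 (k : Type*) [Field k] (n : ℕ) (a : gsAlg k n) :
    ∃ (c₀ : gsC k n) (c : Fin (n + 1) → gsC k n),
      a = (c₀ : gsAlg k n) +
        ∑ i : Fin (n + 1),
          (c i : gsAlg k n) * gsPi k n (ι k (0 : Fin 2) * (ι k (1 : Fin 2)) ^ (i : ℕ)) := by
  have ha := all_mem_M a
  rw [gsM, Submodule.mem_span_insert] at ha
  obtain ⟨c₀, z, hz, rfl⟩ := ha
  rw [Submodule.mem_span_range_iff_exists_fun] at hz
  obtain ⟨c, hc⟩ := hz
  refine ⟨c₀, c, ?_⟩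
  rw [← hc]
  simp only [gs_smul_def, mul_one]
  rfl


end
end
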